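/- Let ι be a nonempty finite index type and for each i ∈ ι let (S i, A i, P i, J i, γ) be a finite MDP with common discount factor γ ∈ [0,1); let V_i* : S i → ℝ be the unique fixed point of the Bellman optimality operator T_i of the i-th sub-MDP, and let V* : (∏ i, S i) → ℝ be the unique fixed point of the Bellman optimality operator T of the product MDP. Then V*(s) = ∑_{i ∈ ι} V_i*(s i) for all s ∈ ∏ i, S i; that is, the optimal value function of the product MDP is the sum of the optimal value functions of the sub-MDPs. -/

import Mathlib

/-!
The Bellman operator of the product MDP maps a separable value function `s ↦ ∑ i, V i (s i)`
to `s ↦ ∑ i, (Tᵢ (V i)) (s i)`, with `Tᵢ` the Bellman operator of the `i`-th MDP: under the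
product transition law the coordinates move independently, so the expectation of a separable
function splits into the local expectations, and the minimum over joint actions of a sum of
terms each depending on one coordinate of the action is the sum of the coordinatewise minima.
Hence `s ↦ ∑ i, Vᵢ* (s i)` is a fixed point of the product Bellman operator, and since that
operator is a `γ`-contraction in the sup norm, it is the only one.
-/

open Finset

lemma Finset.dist_inf'_le {α : Type*} {s : Finset α} (hs : s.Nonempty) {f g : α → ℝ} {C : ℝ}
    (h : ∀ a ∈ s, dist (f a) (g a) ≤ C) : dist (s.inf' hs f) (s.inf' hs g) ≤ C := by
  have inf'_le_add {f g : α → ℝ} (h : ∀ a ∈ s, dist (f a) (g a) ≤ C) :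
      s.inf' hs f ≤ s.inf' hs g + C := by
    refine sub_le_iff_le_add.mp (le_inf' hs _ fun a ha => ?_)
    linarith [inf'_le f ha, (abs_sub_le_iff.mp (h a ha)).1]
  rw [Real.dist_eq, abs_sub_le_iff]
  constructor
  · linarith [inf'_le_add h]
  · linarith [inf'_le_add fun a ha => (dist_comm (g a) (f a)).trans_le (h a ha)]

lemma Finset.inf'_univ_pi_sum {ι : Type*} [Fintype ι] [DecidableEq ι] {A : ι → Type*}
    [∀ i, Fintype (A i)] [∀ i, Nonempty (A i)] (f : ∀ i, A i → ℝ) :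
    (univ : Finset (∀ i, A i)).inf' univ_nonempty (fun a => ∑ i, f i (a i))
      = ∑ i, (univ : Finset (A i)).inf' univ_nonempty (f i) := by
  refine le_antisymm ?_ (le_inf' _ _ fun a _ => sum_le_sum fun i _ => inf'_le _ (mem_univ _))
  choose b _ hb using fun i => exists_mem_eq_inf' (univ_nonempty (α := A i)) (f i)
  calc _ ≤ ∑ i, f i (b i) := inf'_le _ (mem_univ b)
    _ = _ := by simp_rw [hb]

section Expectation

variable {σ : Type*} [Fintype σ]

lemma dist_sum_mul_le_dist {p : σ → ℝ} (hp0 : ∀ x, 0 ≤ p x) (hp1 : ∑ x, p x = 1)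
    (V W : σ → ℝ) : dist (∑ x, p x * V x) (∑ x, p x * W x) ≤ dist V W := by
  rw [Real.dist_eq, ← sum_sub_distrib]
  calc |∑ x, (p x * V x - p x * W x)| ≤ ∑ x, p x * dist V W := by
        refine (abs_sum_le_sum_abs _ _).trans (sum_le_sum fun x _ => ?_)
        rw [← mul_sub, abs_mul, abs_of_nonneg (hp0 x), ← Real.dist_eq]
        exact mul_le_mul_of_nonneg_left (dist_le_pi_dist V W x) (hp0 x)
    _ = dist V W := by rw [← sum_mul, hp1, one_mul]

variable {ι : Type*} [Fintype ι] [DecidableEq ι] {S : ι → Type*} [∀ i, Fintype (S i)]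

lemma sum_pi_prod_mul_apply {p : ∀ i, S i → ℝ} (hp1 : ∀ i, ∑ y, p i y = 1)
    (f : ∀ i, S i → ℝ) (j : ι) :
    ∑ x : ∀ i, S i, (∏ i, p i (x i)) * f j (x j) = ∑ y, p j y * f j y := by
  have factor (x : ∀ i, S i) : (∏ i, p i (x i)) * f j (x j)
      = ∏ i, p i (x i) * (if i = j then f i (x i) else 1) := by
    rw [prod_mul_distrib, prod_ite_eq' univ j, if_pos (mem_univ j)]
  simp_rw [factor, ← Fintype.prod_sum (fun i y => p i y * if i = j then f i y else 1)]
  rw [← prod_erase_mul _ _ (mem_univ j), prod_eq_one fun i hi => by simp [ne_of_mem_erase hi, hp1]]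
  simp

lemma sum_pi_prod_mul_sum {p : ∀ i, S i → ℝ} (hp1 : ∀ i, ∑ y, p i y = 1)
    (f : ∀ i, S i → ℝ) :
    ∑ x : ∀ i, S i, (∏ i, p i (x i)) * ∑ i, f i (x i) = ∑ i, ∑ y, p i y * f i y := by
  simp_rw [mul_sum]
  rw [sum_comm]
  exact sum_congr rfl fun j _ => sum_pi_prod_mul_apply hp1 f j

lemma sum_pi_prod {p : ∀ i, S i → ℝ} (hp1 : ∀ i, ∑ y, p i y = 1) :
    ∑ x : ∀ i, S i, ∏ i, p i (x i) = 1 := by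
  rw [← Fintype.prod_sum p]
  simp [hp1]

end Expectation

noncomputable def bellmanOperator {σ α : Type*} [Fintype σ] [Fintype α] [Nonempty α]
    (P : σ → α → σ → ℝ) (J : σ → α → ℝ) (γ : ℝ) (V : σ → ℝ) : σ → ℝ :=
  fun s => univ.inf' univ_nonempty fun a => J s a + γ * ∑ s', P s a s' * V s'

section Bellman

variable {σ α : Type*} [Fintype σ] [Fintype α] [Nonempty α] {P : σ → α → σ → ℝ}
  {J : σ → α → ℝ} {γ : ℝ}

lemma dist_bellmanOperator_le (hP0 : ∀ s a s', 0 ≤ P s a s') (hP1 : ∀ s a, ∑ s', P s a s' = 1)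
    (hγ0 : 0 ≤ γ) (V W : σ → ℝ) :
    dist (bellmanOperator P J γ V) (bellmanOperator P J γ W) ≤ γ * dist V W := by
  refine (dist_pi_le_iff (by positivity)).mpr fun s => dist_inf'_le _ fun a _ => ?_
  rw [dist_add_left, Real.dist_eq, ← mul_sub, abs_mul, abs_of_nonneg hγ0, ← Real.dist_eq]
  exact mul_le_mul_of_nonneg_left (dist_sum_mul_le_dist (hP0 s a) (hP1 s a) V W) hγ0

lemma bellmanOperator_fixedPoint_unique (hP0 : ∀ s a s', 0 ≤ P s a s')
    (hP1 : ∀ s a, ∑ s', P s a s' = 1) (hγ0 : 0 ≤ γ) (hγ1 : γ < 1) {V W : σ → ℝ}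
    (hV : bellmanOperator P J γ V = V) (hW : bellmanOperator P J γ W = W) : V = W := by
  have hcontr : ContractingWith ⟨γ, hγ0⟩ (bellmanOperator P J γ) :=
    ⟨hγ1, LipschitzWith.of_dist_le_mul (dist_bellmanOperator_le hP0 hP1 hγ0)⟩
  exact hcontr.fixedPoint_unique' hV hW

end Bellman

section Product

variable {ι : Type*} [Fintype ι] {S A : ι → Type*}

def piTransition (P : ∀ i, S i → A i → S i → ℝ) (s : ∀ i, S i) (a : ∀ i, A i)
    (s' : ∀ i, S i) : ℝ :=
  ∏ i, P i (s i) (a i) (s' i)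

def piCost (J : ∀ i, S i → A i → ℝ) (s : ∀ i, S i) (a : ∀ i, A i) : ℝ :=
  ∑ i, J i (s i) (a i)

lemma piTransition_nonneg {P : ∀ i, S i → A i → S i → ℝ} (hP0 : ∀ i x b y, 0 ≤ P i x b y)
    (s a s') : 0 ≤ piTransition P s a s' :=
  prod_nonneg fun i _ => hP0 i _ _ _

variable [DecidableEq ι] [∀ i, Fintype (S i)] {P : ∀ i, S i → A i → S i → ℝ}

lemma sum_piTransition (hP1 : ∀ i x b, ∑ y, P i x b y = 1) (s a) :
    ∑ s', piTransition P s a s' = 1 :=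
  sum_pi_prod fun i => hP1 i (s i) (a i)

lemma bellmanOperator_pi_sum [∀ i, Fintype (A i)] [∀ i, Nonempty (A i)]
    (hP1 : ∀ i x b, ∑ y, P i x b y = 1) (J : ∀ i, S i → A i → ℝ) (γ : ℝ)
    (V : ∀ i, S i → ℝ) :
    bellmanOperator (piTransition P) (piCost J) γ (fun s => ∑ i, V i (s i))
      = fun s => ∑ i, bellmanOperator (P i) (J i) γ (V i) (s i) := by
  funext s
  simp only [bellmanOperator, piTransition, piCost, ← inf'_univ_pi_sum]
  congr 1
  funext a
  rw [sum_pi_prod_mul_sum fun i => hP1 i (s i) (a i), mul_sum, ← sum_add_distrib]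

end Product

theorem product_optimal_value_eq_sum_general
    {ι : Type*} [Fintype ι] [DecidableEq ι]
    (S A : ι → Type*)
    [∀ i, Fintype (S i)]
    [∀ i, Fintype (A i)] [∀ i, Nonempty (A i)]
    (P : ∀ i, S i → A i → S i → ℝ)
    (hP0 : ∀ i, ∀ (x : S i) (b : A i) (y : S i), 0 ≤ P i x b y)
    (hP1 : ∀ i, ∀ (x : S i) (b : A i), ∑ y : S i, P i x b y = 1)
    (J : ∀ i, S i → A i → ℝ)
    (γ : ℝ) (hγ0 : 0 ≤ γ) (hγ1 : γ < 1)
    -- `Vistar i` is the (unique) fixed point of the `i`-th local Bellman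
    -- optimality operator:
    (Vistar : ∀ i, S i → ℝ)
    (hVistar : ∀ i, ∀ x : S i,
      Vistar i x = Finset.univ.inf' Finset.univ_nonempty
        (fun b : A i => J i x b + γ * ∑ y : S i, P i x b y * Vistar i y))
    -- `Vstar` is the (unique) fixed point of the Bellman optimality operator
    -- of the product MDP:
    (Vstar : (∀ i, S i) → ℝ)
    (hVstar : ∀ s : ∀ i, S i,
      Vstar s = Finset.univ.inf' Finset.univ_nonempty
        (fun a : ∀ i, A i =>
          (∑ i, J i (s i) (a i)) +
            γ * ∑ s' : ∀ i, S i, (∏ i, P i (s i) (a i) (s' i)) * Vstar s')) :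
    ∀ s : ∀ i, S i, Vstar s = ∑ i, Vistar i (s i) := by
  have hVistar_fixed (i : ι) : bellmanOperator (P i) (J i) γ (Vistar i) = Vistar i :=
    funext fun x => (hVistar i x).symm
  have hVstar_fixed : bellmanOperator (piTransition P) (piCost J) γ Vstar = Vstar :=
    funext fun s => (hVstar s).symm
  have hsum_fixed : bellmanOperator (piTransition P) (piCost J) γ (fun s => ∑ i, Vistar i (s i))
      = fun s => ∑ i, Vistar i (s i) := by
    simp only [bellmanOperator_pi_sum hP1, hVistar_fixed]
  exact congrFun (bellmanOperator_fixedPoint_unique (piTransition_nonneg hP0)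
    (sum_piTransition hP1) hγ0 hγ1 hVstar_fixed hsum_fixed)

/-- The optimal value function of a product MDP (the unique fixed point of its
Bellman optimality operator) is the sum of the optimal value functions of the
sub-MDPs (the unique fixed points of the local Bellman optimality operators). -/
theorem product_optimal_value_eq_sum
    {ι : Type*} [Fintype ι] [DecidableEq ι] [Nonempty ι]
    (S A : ι → Type*)
    [∀ i, Fintype (S i)] [∀ i, Nonempty (S i)]
    [∀ i, Fintype (A i)] [∀ i, Nonempty (A i)]
    (P : ∀ i, S i → A i → S i → ℝ)
    (hP0 : ∀ i, ∀ (x : S i) (b : A i) (y : S i), 0 ≤ P i x b y)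
    (hP1 : ∀ i, ∀ (x : S i) (b : A i), ∑ y : S i, P i x b y = 1)
    (J : ∀ i, S i → A i → ℝ)
    (γ : ℝ) (hγ0 : 0 ≤ γ) (hγ1 : γ < 1)
    -- `Vistar i` is the (unique) fixed point of the `i`-th local Bellman
    -- optimality operator:
    (Vistar : ∀ i, S i → ℝ)
    (hVistar : ∀ i, ∀ x : S i,
      Vistar i x = Finset.univ.inf' Finset.univ_nonempty
        (fun b : A i => J i x b + γ * ∑ y : S i, P i x b y * Vistar i y))
    -- `Vstar` is the (unique) fixed point of the Bellman optimality operator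
    -- of the product MDP:
    (Vstar : (∀ i, S i) → ℝ)
    (hVstar : ∀ s : ∀ i, S i,
      Vstar s = Finset.univ.inf' Finset.univ_nonempty
        (fun a : ∀ i, A i =>
          (∑ i, J i (s i) (a i)) +
            γ * ∑ s' : ∀ i, S i, (∏ i, P i (s i) (a i) (s' i)) * Vstar s')) :
    ∀ s : ∀ i, S i, Vstar s = ∑ i, Vistar i (s i) :=
  product_optimal_value_eq_sum_general S A P hP0 hP1 J γ hγ0 hγ1 Vistar hVistar Vstar hVstar
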